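/- arXiv:1101.0106 — 3 statements merged into one kernel-verified Lean document; each statement's English description precedes it below -/
import Mathlib

section
/- For every finite pseudo-metric space (M, ρ), the weight of its minimal filling satisfies mf(M, ρ) = inf { mst(N, d) : (N, d) is a finite pseudo-metric space admitting a distance-preserving map f : M → N }, i.e. the infimum of the lengths of minimal spanning trees over all finite extensions of (M, ρ). -/
/-!
A filling `(G, ω)` yields an extension on the vertex set of `G`: glue `ρ` onto the tree metric
`d_ω` along `M` (shortest routes along `d_ω` using at most one shortcut `ι s ⇝ ι t` of length
`ρ s t`). This pseudo-metric restricts to `ρ` on `M` and is at most `ω` on the edges of `G`,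
so `G` itself is a spanning tree of length at most `ω(G)`.

Conversely, let `H` be a spanning tree of an extension `(N, d, f)`. Splicing out a vertex of
degree one or two that is not in `f(M)` (joining its two neighbours when it has two) keeps a
tree and, by the triangle inequality, does not increase its length. Once no such vertex is
left, hang each point of `M` on its image by an edge of length zero (a new leaf, unless it is
the chosen preimage of its image); with edge weights `d` this is a filling, because a path
in the tree is at least as long as the `d`-distance of its ends.
-/

open SimpleGraph Finset

structure IsPseudoMetric {M : Type} (ρ : M → M → ℝ) : Prop where
  nonneg : ∀ p q, 0 ≤ ρ p q
  refl : ∀ p, ρ p p = 0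
  symm : ∀ p q, ρ p q = ρ q p
  triangle : ∀ p q r, ρ p r ≤ ρ p q + ρ q r

/-- A tree joining a finite set `M`: a finite tree `G = (V, E)` with an injection `ι : M → V`
such that every vertex of degree 1 or 2 lies in the image of `M`. -/
structure Frame (M : Type) where
  V : Type
  [fin : Fintype V]
  [deq : DecidableEq V]
  G : SimpleGraph V
  [dec : DecidableRel G.Adj]
  tree : G.IsTree
  ι : M → V
  inj : Function.Injective ι
  joins : ∀ v : V, G.degree v = 1 ∨ G.degree v = 2 → v ∈ Set.range ι

attribute [instance] Frame.fin Frame.deq Frame.dec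

namespace Frame

variable {M : Type}

/-- The unique path between two vertices of the tree. -/
noncomputable def path (F : Frame M) (u v : F.V) : F.G.Walk u v :=
  (F.tree.existsUnique_path u v).exists.choose

/-- `d_ω(u,v)`: the sum of the weights of the edges of the unique path from `u` to `v`. -/
noncomputable def dist (F : Frame M) (w : Sym2 F.V → ℝ) (u v : F.V) : ℝ :=
  ((F.path u v).edges.map w).sum

/-- `ω(G)`: the total weight of all edges of the tree. -/
noncomputable def weight (F : Frame M) (w : Sym2 F.V → ℝ) : ℝ :=
  ∑ e ∈ F.G.edgeFinset, w e

/-- `(G, ω)` is a filling of `(M, ρ)`: nonnegative weights and `ρ p q ≤ d_ω(ι p, ι q)`. -/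
def IsFilling (F : Frame M) (w : Sym2 F.V → ℝ) (ρ : M → M → ℝ) : Prop :=
  (∀ e ∈ F.G.edgeFinset, 0 ≤ w e) ∧
  ∀ p q : M, ρ p q ≤ F.dist w (F.ι p) (F.ι q)

end Frame

/-- `mf(M,ρ)`: the infimum of weights of fillings of `(M, ρ)`. -/
noncomputable def mf {M : Type} (ρ : M → M → ℝ) : ℝ :=
  sInf { x | ∃ F : Frame M, ∃ w : Sym2 F.V → ℝ, F.IsFilling w ρ ∧ F.weight w = x }

/-- A minimal filling: a filling whose weight equals `mf(M,ρ)`. -/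
def IsMinFilling {M : Type} (F : Frame M) (w : Sym2 F.V → ℝ) (ρ : M → M → ℝ) : Prop :=
  F.IsFilling w ρ ∧ F.weight w = mf ρ

/- `mst(N,d)`: the length of a minimal spanning tree of a finite pseudo-metric space `(N, d)`:
the minimum over all spanning trees of the complete graph on `N` of the sum of the
lengths of their edges (each edge counted once, via the symmetrized double sum). -/
open Classical in
noncomputable def mstW {N : Type} [Fintype N] (d : N → N → ℝ) : ℝ :=
  sInf { x | ∃ H : SimpleGraph N, H.IsTree ∧
    x = (∑ u : N, ∑ v : N, if H.Adj u v then d u v else 0) / 2 }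

namespace SimpleGraph

variable {V : Type*} [Fintype V] (G : SimpleGraph V) [DecidableRel G.Adj]

theorem sum_adj_eq_two_nsmul_sum_edgeFinset {R : Type*} [AddCommMonoid R] (g : Sym2 V → R) :
    (∑ u, ∑ v, if G.Adj u v then g s(u, v) else 0) = 2 • ∑ e ∈ G.edgeFinset, g e := by
  classical
  have h_darts : (∑ u, ∑ v, if G.Adj u v then g s(u, v) else 0) = ∑ d : G.Dart, g d.edge := by
    rw [← sum_product', ← sum_filter]
    exact sum_bij' (fun uv h ↦ ⟨uv, (mem_filter.1 h).2⟩) (fun d _ ↦ d.toProd)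
      (by simp) (by simp) (by simp) (by simp) (by simp [Dart.edge])
  rw [h_darts, ← sum_fiberwise_of_maps_to (g := Dart.edge) (t := G.edgeFinset)
    (by simp), smul_sum]
  refine sum_congr rfl fun e he ↦ ?_
  rw [sum_congr rfl fun d hd ↦ by rw [(mem_filter.1 hd).2], sum_const,
    G.dart_edge_fiber_card e (mem_edgeFinset.1 he)]

end SimpleGraph

namespace IsPseudoMetric

variable {N : Type} {d : N → N → ℝ}

def edgeLength (hd : IsPseudoMetric d) : Sym2 N → ℝ := Sym2.lift ⟨d, hd.symm⟩

@[simp] lemma edgeLength_mk (hd : IsPseudoMetric d) (u v : N) : hd.edgeLength s(u, v) = d u v :=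
  rfl

lemma edgeLength_nonneg (hd : IsPseudoMetric d) (e : Sym2 N) : 0 ≤ hd.edgeLength e :=
  e.ind hd.nonneg

lemma sum_adj_div_two_eq_sum_edgeLength [Fintype N] (hd : IsPseudoMetric d) (H : SimpleGraph N)
    [DecidableRel H.Adj] :
    (∑ u, ∑ v, if H.Adj u v then d u v else 0) / 2 = ∑ e ∈ H.edgeFinset, hd.edgeLength e := by
  have h := H.sum_adj_eq_two_nsmul_sum_edgeFinset hd.edgeLength
  simp only [edgeLength_mk] at h
  rw [h, nsmul_eq_mul]
  ring

lemma sum_adj_div_two_nonneg [Fintype N] (hd : IsPseudoMetric d) (H : SimpleGraph N)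
    [DecidableRel H.Adj] : 0 ≤ (∑ u, ∑ v, if H.Adj u v then d u v else 0) / 2 := by
  rw [hd.sum_adj_div_two_eq_sum_edgeLength]
  exact sum_nonneg fun e _ ↦ hd.edgeLength_nonneg e

lemma le_sum_map_edges (hd : IsPseudoMetric d) {V : Type} {G : SimpleGraph V} (π : V → N)
    {u v : V} (p : G.Walk u v) :
    d (π u) (π v) ≤ (p.edges.map (hd.edgeLength ∘ Sym2.map π)).sum := by
  induction p with
  | nil => simp [hd.refl]
  | @cons _ w _ _ q ih =>
    rw [Walk.edges_cons, List.map_cons, List.sum_cons]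
    exact (hd.triangle _ (π w) _).trans (add_le_add le_rfl ih)

lemma comp {N' : Type} (hd : IsPseudoMetric d) (g : N' → N) :
    IsPseudoMetric fun x y ↦ d (g x) (g y) where
  nonneg _ _ := hd.nonneg _ _
  refl _ := hd.refl _
  symm _ _ := hd.symm _ _
  triangle _ _ _ := hd.triangle _ _ _

lemma edgeLength_comp {N' : Type} (hd : IsPseudoMetric d)
    (g : N' → N) (e : Sym2 N') : (hd.comp g).edgeLength e = hd.edgeLength (e.map g) :=
  e.ind fun _ _ ↦ rfl

section mstW

variable [Fintype N] (hd : IsPseudoMetric d)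
include hd

lemma mstW_le (H : SimpleGraph N) [DecidableRel H.Adj] (hH : H.IsTree) :
    mstW d ≤ ∑ e ∈ H.edgeFinset, hd.edgeLength e := by
  classical
  refine csInf_le ⟨0, ?_⟩ ⟨H, hH, ?_⟩
  · rintro x ⟨H', -, rfl⟩
    exact hd.sum_adj_div_two_nonneg H'
  · convert (hd.sum_adj_div_two_eq_sum_edgeLength H).symm

lemma mstW_nonneg : 0 ≤ mstW d := by
  classical
  refine Real.sInf_nonneg ?_
  rintro x ⟨H, -, rfl⟩
  exact hd.sum_adj_div_two_nonneg H

lemma le_mstW [Nonempty N] {x : ℝ}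
    (h : ∀ (H : SimpleGraph N) [DecidableRel H.Adj], H.IsTree →
      x ≤ ∑ e ∈ H.edgeFinset, hd.edgeLength e) :
    x ≤ mstW d := by
  classical
  obtain ⟨T, -, hT⟩ := (connected_top (V := N)).exists_isTree_le
  refine le_csInf ⟨_, T, hT, rfl⟩ ?_
  rintro y ⟨H, hH, rfl⟩
  rw [hd.sum_adj_div_two_eq_sum_edgeLength]
  exact h H hH

end mstW

end IsPseudoMetric

namespace Frame

variable {M : Type} (F : Frame M)

lemma path_isPath (u v : F.V) : (F.path u v).IsPath :=
  (F.tree.existsUnique_path u v).exists.choose_spec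

lemma eq_path {u v : F.V} (q : F.G.Walk u v) (hq : q.IsPath) : q = F.path u v :=
  (F.tree.existsUnique_path u v).unique hq (F.path_isPath u v)

variable {F} {w : Sym2 F.V → ℝ} (hw : ∀ e ∈ F.G.edgeFinset, 0 ≤ w e)
include hw

lemma dist_le_sum_edges {u v : F.V} (p : F.G.Walk u v) : F.dist w u v ≤ (p.edges.map w).sum := by
  rw [dist, ← F.eq_path p.bypass p.bypass_isPath]
  obtain ⟨l, hperm, hsub⟩ :=
    p.bypass_isPath.isTrail.edges_nodup.subperm p.edges_bypass_subset_edges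
  rw [← (hperm.map w).sum_eq]
  refine (hsub.map w).sum_le_sum ?_
  simp only [List.mem_map]
  rintro _ ⟨e, he, rfl⟩
  exact hw e (mem_edgeFinset.2 (p.edges_subset_edgeSet he))

lemma dist_le_of_adj {u v : F.V} (h : F.G.Adj u v) : F.dist w u v ≤ w s(u, v) := by
  simpa using dist_le_sum_edges hw (h.toWalk)

lemma isPseudoMetric_dist : IsPseudoMetric (F.dist w) where
  nonneg u v := List.sum_nonneg <| by
    simp only [List.mem_map]
    rintro _ ⟨e, he, rfl⟩
    exact hw e (mem_edgeFinset.2 ((F.path u v).edges_subset_edgeSet he))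
  refl u := by rw [dist, ← F.eq_path _ (Walk.IsPath.nil (u := u))]; simp
  symm u v := by
    rw [dist, dist, ← F.eq_path _ (F.path_isPath u v).reverse, Walk.edges_reverse,
      List.map_reverse, List.sum_reverse]
  triangle u x v := by
    simpa [dist] using dist_le_sum_edges hw ((F.path u x).append (F.path x v))

end Frame

lemma Frame.IsFilling.weight_nonneg {M : Type} {F : Frame M} {w : Sym2 F.V → ℝ} {ρ : M → M → ℝ}
    (hF : F.IsFilling w ρ) : 0 ≤ F.weight w :=
  sum_nonneg hF.1

lemma mf_le_weight {M : Type} {F : Frame M} {w : Sym2 F.V → ℝ} {ρ : M → M → ℝ}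
    (hF : F.IsFilling w ρ) : mf ρ ≤ F.weight w :=
  csInf_le ⟨0, by rintro _ ⟨F', w', hF', rfl⟩; exact hF'.weight_nonneg⟩ ⟨F, w, hF, rfl⟩

lemma exists_filling_weight_eq_zero {M : Type} [IsEmpty M] (ρ : M → M → ℝ) :
    ∃ (F : Frame M) (w : Sym2 F.V → ℝ), F.IsFilling w ρ ∧ F.weight w = 0 :=
  ⟨⟨PUnit, ⊥, .of_subsingleton, isEmptyElim, fun p ↦ isEmptyElim p, fun v hv ↦ by simp at hv⟩,
    0, ⟨fun _ _ ↦ le_rfl, isEmptyElim⟩, by simp [Frame.weight]⟩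

section Glue

variable {M V : Type} [Fintype M] (D : V → V → ℝ) (ρ : M → M → ℝ) (ι : M → V)

/-- The length of a shortest route from `u` to `v` that moves along `D` and may take one
shortcut from `ι s` to `ι t` of length `ρ s t`. -/
noncomputable def glue (u v : V) : ℝ :=
  univ.inf' univ_nonempty fun o : Option (M × M) ↦
    o.elim (D u v) fun st ↦ D u (ι st.1) + ρ st.1 st.2 + D (ι st.2) v

variable {D ρ ι}

lemma glue_le (u v : V) : glue D ρ ι u v ≤ D u v :=
  inf'_le _ (mem_univ (none : Option (M × M)))

lemma glue_le_add (u v : V) (s t : M) :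
    glue D ρ ι u v ≤ D u (ι s) + ρ s t + D (ι t) v :=
  inf'_le _ (mem_univ (some (s, t) : Option (M × M)))

lemma le_glue {x : ℝ} {u v : V} (h : x ≤ D u v)
    (h' : ∀ s t, x ≤ D u (ι s) + ρ s t + D (ι t) v) : x ≤ glue D ρ ι u v :=
  le_inf' _ _ fun o _ ↦ by cases o <;> simp_all

lemma glue_eq_or (u v : V) : glue D ρ ι u v = D u v ∨
    ∃ s t, glue D ρ ι u v = D u (ι s) + ρ s t + D (ι t) v := by
  obtain ⟨o, -, ho⟩ := exists_mem_eq_inf' univ_nonempty fun o : Option (M × M) ↦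
    o.elim (D u v) fun st ↦ D u (ι st.1) + ρ st.1 st.2 + D (ι st.2) v
  rcases o with _ | ⟨s, t⟩
  exacts [Or.inl ho, Or.inr ⟨s, t, ho⟩]

variable (hD : IsPseudoMetric D) (hρ : IsPseudoMetric ρ)
include hD hρ

lemma glue_nonneg (u v : V) : 0 ≤ glue D ρ ι u v :=
  le_glue (hD.nonneg u v) fun s t ↦
    add_nonneg (add_nonneg (hD.nonneg _ _) (hρ.nonneg s t)) (hD.nonneg _ _)

lemma glue_le_glue_swap (u v : V) : glue D ρ ι u v ≤ glue D ρ ι v u := by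
  rcases glue_eq_or (D := D) (ρ := ρ) (ι := ι) v u with h | ⟨s, t, h⟩ <;> rw [h]
  · exact (glue_le u v).trans_eq (hD.symm u v)
  · calc glue D ρ ι u v ≤ D u (ι t) + ρ t s + D (ι s) v := glue_le_add u v t s
      _ = D v (ι s) + ρ s t + D (ι t) u := by rw [hD.symm u, hρ.symm t, hD.symm (ι s)]; ring

lemma glue_triangle (hle : ∀ p q, ρ p q ≤ D (ι p) (ι q)) (u x v : V) :
    glue D ρ ι u v ≤ glue D ρ ι u x + glue D ρ ι x v := by
  obtain h₁ | ⟨s, t, h₁⟩ := glue_eq_or (D := D) (ρ := ρ) (ι := ι) u x <;>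
    obtain h₂ | ⟨s', t', h₂⟩ := glue_eq_or (D := D) (ρ := ρ) (ι := ι) x v <;> rw [h₁, h₂]
  · exact (glue_le u v).trans (hD.triangle u x v)
  · linarith [glue_le_add (D := D) (ρ := ρ) (ι := ι) u v s' t', hD.triangle u x (ι s')]
  · linarith [glue_le_add (D := D) (ρ := ρ) (ι := ι) u v s t, hD.triangle (ι t) x v]
  · -- the two shortcuts merge into one, since `ρ t s'` is at most the detour through `x`
    have hmerge : ρ s t' ≤ ρ s t + ρ t s' + ρ s' t' := by
      linarith [hρ.triangle s t t', hρ.triangle t s' t']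
    linarith [glue_le_add (D := D) (ρ := ρ) (ι := ι) u v s t', hle t s', hD.triangle (ι t) x (ι s'),
      hD.symm x (ι s')]

lemma isPseudoMetric_glue (hle : ∀ p q, ρ p q ≤ D (ι p) (ι q)) :
    IsPseudoMetric (glue D ρ ι) where
  nonneg := glue_nonneg hD hρ
  refl u := le_antisymm ((glue_le u u).trans_eq (hD.refl u)) (glue_nonneg hD hρ u u)
  symm u v := le_antisymm (glue_le_glue_swap hD hρ u v) (glue_le_glue_swap hD hρ v u)
  triangle := glue_triangle hD hρ hle

lemma glue_apply_apply (hle : ∀ p q, ρ p q ≤ D (ι p) (ι q)) (p q : M) :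
    glue D ρ ι (ι p) (ι q) = ρ p q := by
  refine le_antisymm ?_ (le_glue (hle p q) fun s t ↦ ?_)
  · simpa [hD.refl] using glue_le_add (D := D) (ρ := ρ) (ι := ι) (ι p) (ι q) p q
  · linarith [hρ.triangle p s q, hρ.triangle s t q, hle p s, hle t q]

end Glue

lemma exists_extension_mstW_le {M : Type} [Fintype M] {ρ : M → M → ℝ} (hρ : IsPseudoMetric ρ)
    (F : Frame M) (w : Sym2 F.V → ℝ) (hF : F.IsFilling w ρ) :
    ∃ (N : Type) (iN : Fintype N) (d : N → N → ℝ) (f : M → N),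
      IsPseudoMetric d ∧ (∀ p q, d (f p) (f q) = ρ p q) ∧ @mstW N iN d ≤ F.weight w := by
  obtain ⟨hw, hle⟩ := hF
  have hD := Frame.isPseudoMetric_dist hw
  have hglue := isPseudoMetric_glue hD hρ hle
  refine ⟨F.V, inferInstance, glue (F.dist w) ρ F.ι, F.ι, hglue, glue_apply_apply hD hρ hle,
    (hglue.mstW_le F.G F.tree).trans (sum_le_sum fun e he ↦ ?_)⟩
  induction e using Sym2.ind with | _ u v =>
  exact (glue_le u v).trans (Frame.dist_le_of_adj hw (mem_edgeFinset.1 he))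

namespace SimpleGraph

variable {N P : Type*} (H : SimpleGraph N) (g : P → N)

def withPendants : SimpleGraph (N ⊕ P) where
  Adj
    | .inl a, .inl b => H.Adj a b
    | .inl a, .inr p => g p = a
    | .inr p, .inl a => g p = a
    | .inr _, .inr _ => False
  symm := ⟨by rintro (a | p) (b | q) h <;> first | exact h | exact H.symm.symm _ _ h⟩
  loopless := ⟨by rintro (a | p) h; exacts [H.loopless.irrefl a h, h]⟩

variable {H g}

@[simp] lemma withPendants_adj_inl_inl {a b : N} :
    (H.withPendants g).Adj (.inl a) (.inl b) ↔ H.Adj a b := Iff.rfl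

@[simp] lemma withPendants_adj_inl_inr {a : N} {p : P} :
    (H.withPendants g).Adj (.inl a) (.inr p) ↔ g p = a := Iff.rfl

@[simp] lemma withPendants_adj_inr_inl {a : N} {p : P} :
    (H.withPendants g).Adj (.inr p) (.inl a) ↔ g p = a := Iff.rfl

@[simp] lemma withPendants_adj_inr_inr {p q : P} :
    ¬ (H.withPendants g).Adj (.inr p) (.inr q) := id

lemma Connected.withPendants (hH : H.Connected) : (H.withPendants g).Connected := by
  have : Nonempty N := hH.nonempty
  have hN : ∀ a b, (H.withPendants g).Reachable (.inl a) (.inl b) := fun a b ↦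
    (hH.preconnected a b).map ⟨Sum.inl, withPendants_adj_inl_inl.2⟩
  have hP : ∀ p, (H.withPendants g).Reachable (.inr p) (.inl (g p)) := fun p ↦
    Adj.reachable (withPendants_adj_inr_inl.2 rfl)
  refine Connected.mk ?_
  rintro (a | p) (b | q)
  exacts [hN a b, (hN a _).trans (hP q).symm, (hP p).trans (hN _ b),
    (hP p).trans ((hN _ _).trans (hP q).symm)]

lemma degree_withPendants_inl [Fintype N] [Fintype P] [DecidableRel H.Adj]
    [DecidableRel (H.withPendants g).Adj] {n : N} (hn : n ∉ Set.range g) :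
    (H.withPendants g).degree (.inl n) = H.degree n := by
  have : (H.withPendants g).neighborFinset (.inl n) = (H.neighborFinset n).map .inl := by
    ext (b | q)
    · simp
    · simpa using fun h ↦ hn ⟨q, h⟩
  rw [← card_neighborFinset_eq_degree, this, card_map, card_neighborFinset_eq_degree]

variable (g) in
def pendantEdge : Sym2 N ⊕ P → Sym2 (N ⊕ P) :=
  Sum.elim (Sym2.map .inl) fun p ↦ s(.inl (g p), .inr p)

variable (g) in
lemma pendantEdge_injective : (pendantEdge g).Injective := by
  rintro (e | p) (e' | q) h
  · exact congrArg _ (Sym2.map.injective Sum.inl_injective h)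
  · induction e using Sym2.ind
    simp [pendantEdge] at h
  · induction e' using Sym2.ind
    simp [pendantEdge] at h
  · simp_all [pendantEdge]

section Finite

variable [Fintype P] [Fintype H.edgeSet] [Fintype (H.withPendants g).edgeSet]

lemma edgeFinset_withPendants [DecidableEq N] [DecidableEq P] :
    (H.withPendants g).edgeFinset = (H.edgeFinset.disjSum univ).image (pendantEdge g) := by
  ext e
  simp only [mem_edgeFinset, mem_image, Sum.exists, inl_mem_disjSum, inr_mem_disjSum,
    mem_univ, true_and, pendantEdge, Sum.elim_inl, Sum.elim_inr]
  constructor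
  · induction e using Sym2.ind with | _ x y => ?_
    rcases x with a | p <;> rcases y with b | q <;> intro h <;> rw [mem_edgeSet] at h
    · exact Or.inl ⟨s(a, b), h, rfl⟩
    · exact Or.inr ⟨q, by rw [(withPendants_adj_inl_inr.1 h)]⟩
    · exact Or.inr ⟨p, by rw [(withPendants_adj_inr_inl.1 h), Sym2.eq_swap]⟩
    · exact (withPendants_adj_inr_inr h).elim
  · rintro (⟨e, he, rfl⟩ | ⟨p, rfl⟩)
    · induction e using Sym2.ind
      exact he
    · exact withPendants_adj_inl_inr (H := H).2 rfl

lemma sum_edgeFinset_withPendants {R : Type*} [AddCommMonoid R] (φ : Sym2 (N ⊕ P) → R) :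
    ∑ e ∈ (H.withPendants g).edgeFinset, φ e =
      ∑ e ∈ H.edgeFinset, φ (e.map .inl) + ∑ p, φ s(.inl (g p), .inr p) := by
  classical
  rw [edgeFinset_withPendants, sum_image (pendantEdge_injective g).injOn, sum_disjSum]
  rfl

end Finite

lemma IsTree.withPendants [Fintype N] [Fintype P] (hH : H.IsTree) (g : P → N) :
    (H.withPendants g).IsTree := by
  classical
  rw [isTree_iff_connected_and_card]
  refine ⟨hH.connected.withPendants, ?_⟩
  rw [Nat.card_eq_fintype_card, ← edgeFinset_card, card_eq_sum_ones,
    sum_edgeFinset_withPendants, ← card_eq_sum_ones, sum_const, smul_eq_mul, mul_one,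
    card_univ, Nat.card_eq_fintype_card, Fintype.card_sum, ← hH.card_edgeFinset]
  ring

end SimpleGraph

section PendantFrame

open Function

variable {M N : Type} [Nonempty M] (f : M → N)

open Classical in
/-- A point `p` other than the chosen preimage `invFun f (f p)` of its image gets a new leaf
hung at `f p`; this makes the placement injective. -/
noncomputable def pendantVertex (p : M) : N ⊕ {p : M // invFun f (f p) ≠ p} :=
  if h : invFun f (f p) = p then .inl (f p) else .inr ⟨p, h⟩

variable {f}

lemma pendantVertex_injective : Injective (pendantVertex f) := by
  intro p q hpq
  unfold pendantVertex at hpq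
  split_ifs at hpq with hp hq hq
  · rw [← hp, ← hq, Sum.inl_injective hpq]
  · exact congrArg Subtype.val (Sum.inr_injective hpq)

lemma elim_pendantVertex (p : M) :
    Sum.elim id (fun q : {q // invFun f (f q) ≠ q} ↦ f q) (pendantVertex f p) = f p := by
  unfold pendantVertex
  split_ifs <;> rfl

lemma inl_mem_range_pendantVertex {n : N} (hn : n ∈ Set.range f) :
    (.inl n : N ⊕ {p // invFun f (f p) ≠ p}) ∈ Set.range (pendantVertex f) := by
  have hfn : f (invFun f n) = n := invFun_eq hn
  refine ⟨invFun f n, ?_⟩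
  rw [pendantVertex, dif_pos (by rw [hfn]), hfn]

lemma inr_mem_range_pendantVertex (p : {p : M // invFun f (f p) ≠ p}) :
    (.inr p : N ⊕ {p // invFun f (f p) ≠ p}) ∈ Set.range (pendantVertex f) :=
  ⟨p, by rw [pendantVertex, dif_neg p.2]⟩

variable [Fintype M] [Fintype N] (H : SimpleGraph N) [DecidableRel H.Adj]

open Classical in
@[reducible] noncomputable def pendantFrame (hH : H.IsTree)
    (hgood : ∀ n, H.degree n = 1 ∨ H.degree n = 2 → n ∈ Set.range f) : Frame M where
  V := N ⊕ {p : M // invFun f (f p) ≠ p}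
  G := H.withPendants fun p ↦ f p
  tree := hH.withPendants _
  ι := pendantVertex f
  inj := pendantVertex_injective
  joins := by
    rintro (n | p) hdeg
    · by_cases hn : n ∈ Set.range f
      · exact inl_mem_range_pendantVertex hn
      · rw [degree_withPendants_inl (g := fun p : {p : M // invFun f (f p) ≠ p} ↦ f p)
          fun ⟨p, hp⟩ ↦ hn ⟨p, hp⟩] at hdeg
        exact absurd (hgood n hdeg) hn
    · exact inr_mem_range_pendantVertex p

lemma exists_filling_of_isTree {ρ : M → M → ℝ} {d : N → N → ℝ} (hd : IsPseudoMetric d)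
    (hext : ∀ p q, d (f p) (f q) = ρ p q) (hH : H.IsTree)
    (hgood : ∀ n, H.degree n = 1 ∨ H.degree n = 2 → n ∈ Set.range f) :
    ∃ (F : Frame M) (w : Sym2 F.V → ℝ),
      F.IsFilling w ρ ∧ F.weight w = ∑ e ∈ H.edgeFinset, hd.edgeLength e := by
  classical
  set π : N ⊕ {p : M // invFun f (f p) ≠ p} → N := Sum.elim id fun p ↦ f p
  refine ⟨pendantFrame H hH hgood, hd.edgeLength ∘ Sym2.map π,
    ⟨fun e _ ↦ hd.edgeLength_nonneg _, fun p q ↦ ?_⟩, ?_⟩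
  · rw [← hext, ← elim_pendantVertex (f := f) p, ← elim_pendantVertex (f := f) q]
    exact hd.le_sum_map_edges π _
  · rw [Frame.weight, sum_edgeFinset_withPendants]
    simp [π, Sym2.map_map, hd.refl]

end PendantFrame

namespace SimpleGraph

variable {N : Type*} (H : SimpleGraph N) (v : N)

def splice : SimpleGraph {x // x ≠ v} where
  Adj x y := H.Adj x y ∨ (x.1 ≠ y.1 ∧ H.Adj x v ∧ H.Adj v y)
  symm := ⟨by
    rintro x y (h | ⟨hne, hx, hy⟩)
    exacts [.inl h.symm, .inr ⟨hne.symm, hy.symm, hx.symm⟩]⟩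
  loopless := ⟨by
    rintro x (h | ⟨hne, -, -⟩)
    exacts [H.loopless.irrefl _ h, hne rfl]⟩

variable {H v}

lemma reachable_splice_of_walk {u y : N} (p : H.Walk u y) (hy : y ≠ v) :
    (∀ hu : u ≠ v, (H.splice v).Reachable ⟨u, hu⟩ ⟨y, hy⟩) ∧
      (u = v → ∀ x (hx : x ≠ v), H.Adj x v → (H.splice v).Reachable ⟨x, hx⟩ ⟨y, hy⟩) := by
  induction p with
  | nil => exact ⟨fun _ ↦ .refl _, fun h ↦ absurd h hy⟩
  | @cons u z y h q ih =>
    refine ⟨fun hu ↦ ?_, ?_⟩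
    · by_cases hz : z = v
      · exact (ih hy).2 hz u hu (hz ▸ h)
      · exact (Adj.reachable (Or.inl h : (H.splice v).Adj ⟨u, hu⟩ ⟨z, hz⟩)).trans ((ih hy).1 hz)
    · rintro rfl x hx hxv
      have hz : z ≠ u := (H.ne_of_adj h).symm
      by_cases hxz : x = z
      · subst hxz
        exact (ih hy).1 hz
      · exact (Adj.reachable
          (Or.inr ⟨hxz, hxv, h⟩ : (H.splice u).Adj ⟨x, hx⟩ ⟨z, hz⟩)).trans ((ih hy).1 hz)

lemma Connected.splice (hH : H.Connected) {a : N} (ha : H.Adj v a) :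
    (H.splice v).Connected := by
  have : Nonempty {x // x ≠ v} := ⟨⟨a, (H.ne_of_adj ha).symm⟩⟩
  exact .mk fun ⟨x, hx⟩ ⟨y, hy⟩ ↦ (reachable_splice_of_walk (hH.preconnected x y).some hy).1 hx

section Finite

variable [Fintype N] [DecidableEq N] [DecidableRel H.Adj]

/-- The new edges of the splice at a vertex of degree one or two: none, or the single edge
joining its two neighbours. -/
lemma exists_finset_splice (hdeg : H.degree v = 1 ∨ H.degree v = 2) :
    ∃ T : Finset (Sym2 N), (∀ b c, b ≠ c → H.Adj b v → H.Adj v c → s(b, c) ∈ T) ∧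
      #T < H.degree v ∧ ∀ φ : Sym2 N → ℝ, (∀ e, 0 ≤ φ e) →
        (∀ b c, φ s(b, c) ≤ φ s(v, b) + φ s(v, c)) →
        ∑ e ∈ T, φ e ≤ ∑ e ∈ {e ∈ H.edgeFinset | v ∈ e}, φ e := by
  rcases hdeg with hdeg | hdeg
  · obtain ⟨c, hc⟩ := card_eq_one.1 hdeg
    refine ⟨∅, fun b c' hbc hb hc' ↦ ?_, by simp [hdeg], fun φ hφ _ ↦ ?_⟩
    · have hb' : b ∈ H.neighborFinset v := (mem_neighborFinset _ _ _).2 hb.symm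
      have hc'' : c' ∈ H.neighborFinset v := (mem_neighborFinset _ _ _).2 hc'
      rw [hc, mem_singleton] at hb' hc''
      exact absurd (hb'.trans hc''.symm) hbc
    · simpa using sum_nonneg fun e _ ↦ hφ e
  · obtain ⟨b, c, hbc, hnb⟩ := card_eq_two.1 hdeg
    have hmem : ∀ x, H.Adj v x ↔ x = b ∨ x = c := fun x ↦ by
      rw [← mem_neighborFinset, hnb, mem_insert, mem_singleton]
    refine ⟨{s(b, c)}, fun b' c' hbc' hb' hc' ↦ ?_, by simp [hdeg], fun φ hφ htri ↦ ?_⟩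
    · rcases (hmem b').1 hb'.symm with rfl | rfl <;> rcases (hmem c').1 hc' with rfl | rfl
      all_goals first | exact absurd rfl hbc' | simp [Sym2.eq_swap]
    · have hvb : s(v, b) ≠ s(v, c) := fun h ↦ hbc (Sym2.congr_right.1 h)
      calc ∑ e ∈ {s(b, c)}, φ e ≤ φ s(v, b) + φ s(v, c) := by simpa using htri b c
        _ = ∑ e ∈ {s(v, b), s(v, c)}, φ e := (sum_pair hvb).symm
        _ ≤ ∑ e ∈ {e ∈ H.edgeFinset | v ∈ e}, φ e := by
          refine sum_le_sum_of_subset_of_nonneg ?_ fun e _ _ ↦ hφ e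
          simp [insert_subset_iff, hmem]

variable [DecidableRel (H.splice v).Adj]

lemma image_edgeFinset_splice_subset {T : Finset (Sym2 N)}
    (hT : ∀ b c, b ≠ c → H.Adj b v → H.Adj v c → s(b, c) ∈ T) :
    (H.splice v).edgeFinset.image (Sym2.map Subtype.val) ⊆ {e ∈ H.edgeFinset | v ∉ e} ∪ T := by
  simp only [subset_iff, mem_image]
  rintro _ ⟨e, he, rfl⟩
  induction e using Sym2.ind with | _ x y => ?_
  rcases (mem_edgeFinset.1 he : (H.splice v).Adj x y) with h | ⟨hne, hx, hy⟩
  · refine mem_union_left _ (mem_filter.2 ⟨mem_edgeFinset.2 h, ?_⟩)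
    simp [Sym2.mem_iff, x.2.symm, y.2.symm]
  · exact mem_union_right _ (hT _ _ hne hx hy)

lemma card_edgeFinset_splice_lt (hdeg : H.degree v = 1 ∨ H.degree v = 2) :
    #(H.splice v).edgeFinset < #H.edgeFinset := by
  obtain ⟨T, hT, hcard, -⟩ := exists_finset_splice hdeg
  have hsplice : #(H.splice v).edgeFinset ≤ #{e ∈ H.edgeFinset | v ∉ e} + #T := by
    rw [← card_image_of_injective _ (Sym2.map.injective Subtype.val_injective)]
    exact (card_le_card (image_edgeFinset_splice_subset hT)).trans (card_union_le _ _)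
  have hstar : #{e ∈ H.edgeFinset | v ∈ e} = H.degree v := by
    rw [← incidenceFinset_eq_filter, card_incidenceFinset_eq_degree]
  have := card_filter_add_card_filter_not (s := H.edgeFinset) (v ∈ ·)
  omega

lemma sum_edgeFinset_splice_le (hdeg : H.degree v = 1 ∨ H.degree v = 2) {φ : Sym2 N → ℝ}
    (hφ : ∀ e, 0 ≤ φ e) (htri : ∀ b c, φ s(b, c) ≤ φ s(v, b) + φ s(v, c)) :
    ∑ e ∈ (H.splice v).edgeFinset, φ (e.map Subtype.val) ≤ ∑ e ∈ H.edgeFinset, φ e := by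
  obtain ⟨T, hT, -, hTφ⟩ := exists_finset_splice hdeg
  have hunion := sum_union_inter (s₁ := {e ∈ H.edgeFinset | v ∉ e}) (s₂ := T) (f := φ)
  have hinter : 0 ≤ ∑ e ∈ {e ∈ H.edgeFinset | v ∉ e} ∩ T, φ e := sum_nonneg fun e _ ↦ hφ e
  calc ∑ e ∈ (H.splice v).edgeFinset, φ (e.map Subtype.val)
      = ∑ e ∈ (H.splice v).edgeFinset.image (Sym2.map Subtype.val), φ e :=
        (sum_image fun _ _ _ _ h ↦ Sym2.map.injective Subtype.val_injective h).symm
    _ ≤ ∑ e ∈ {e ∈ H.edgeFinset | v ∉ e} ∪ T, φ e :=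
        sum_le_sum_of_subset_of_nonneg (image_edgeFinset_splice_subset hT) fun e _ _ ↦ hφ e
    _ ≤ ∑ e ∈ {e ∈ H.edgeFinset | v ∉ e}, φ e + ∑ e ∈ {e ∈ H.edgeFinset | v ∈ e}, φ e := by
        linarith [hTφ φ hφ htri]
    _ = ∑ e ∈ H.edgeFinset, φ e := by rw [add_comm, sum_filter_add_sum_filter_not]

end Finite

lemma IsTree.splice [Fintype N] [DecidableRel H.Adj] (hH : H.IsTree)
    (hdeg : H.degree v = 1 ∨ H.degree v = 2) :
    (H.splice v).IsTree := by
  classical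
  obtain ⟨a, ha⟩ := (H.degree_pos_iff_exists_adj v).1 (by omega)
  have hconn := hH.connected.splice ha
  have hcard : Fintype.card {x // x ≠ v} + 1 = Fintype.card N := by
    have : 0 < Fintype.card N := Fintype.card_pos_iff.2 ⟨v⟩
    simp only [ne_eq, Fintype.card_subtype_compl, Fintype.card_subtype_eq]
    omega
  rw [isTree_iff_connected_and_card]
  refine ⟨hconn, le_antisymm ?_ hconn.card_vert_le_card_edgeSet_add_one⟩
  rw [Nat.card_eq_fintype_card, ← edgeFinset_card, Nat.card_eq_fintype_card]
  have := card_edgeFinset_splice_lt hdeg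
  have := hH.card_edgeFinset
  omega

end SimpleGraph

section Filling

variable {M : Type} [Fintype M] {ρ : M → M → ℝ}

lemma exists_filling_weight_le [Nonempty M] {N : Type} [Fintype N] {d : N → N → ℝ}
    (hd : IsPseudoMetric d) {f : M → N} (hext : ∀ p q, d (f p) (f q) = ρ p q)
    (H : SimpleGraph N) [DecidableRel H.Adj] (hH : H.IsTree) :
    ∃ (F : Frame M) (w : Sym2 F.V → ℝ),
      F.IsFilling w ρ ∧ F.weight w ≤ ∑ e ∈ H.edgeFinset, hd.edgeLength e := by
  induction hn : Fintype.card N using Nat.strong_induction_on generalizing N with | _ n ih => ?_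
  by_cases hgood : ∀ x, H.degree x = 1 ∨ H.degree x = 2 → x ∈ Set.range f
  · obtain ⟨F, w, hF, hw⟩ := exists_filling_of_isTree H hd hext hH hgood
    exact ⟨F, w, hF, hw.le⟩
  push Not at hgood
  obtain ⟨v, hdeg, hv⟩ := hgood
  classical
  have hcard : Fintype.card {x // x ≠ v} < n := by
    rw [← hn]
    exact Fintype.card_subtype_lt (p := (· ≠ v)) (not_not.2 rfl)
  obtain ⟨F, w, hF, hw⟩ := ih _ hcard (hd.comp Subtype.val)
    (f := fun p ↦ ⟨f p, fun h ↦ hv ⟨p, h⟩⟩) hext (H.splice v) (hH.splice hdeg) rfl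
  refine ⟨F, w, hF, hw.trans ?_⟩
  refine (sum_congr rfl fun e _ ↦ hd.edgeLength_comp Subtype.val e).trans_le
    (sum_edgeFinset_splice_le hdeg hd.edgeLength_nonneg fun b c ↦ ?_)
  simpa [hd.symm v b] using hd.triangle b v c

end Filling

section Main

variable {M : Type} [Fintype M] {ρ : M → M → ℝ}

lemma mf_le_mstW {N : Type} [Fintype N] {d : N → N → ℝ} (hd : IsPseudoMetric d) {f : M → N}
    (hext : ∀ p q, d (f p) (f q) = ρ p q) : mf ρ ≤ mstW d := by
  rcases isEmpty_or_nonempty M with hM | hM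
  · obtain ⟨F, w, hF, hw⟩ := exists_filling_weight_eq_zero ρ
    exact (mf_le_weight hF).trans (hw.trans_le hd.mstW_nonneg)
  · have : Nonempty N := hM.map f
    refine hd.le_mstW fun H _ hH ↦ ?_
    obtain ⟨F, w, hF, hw⟩ := exists_filling_weight_le hd hext H hH
    exact (mf_le_weight hF).trans hw

lemma exists_filling (hρ : IsPseudoMetric ρ) :
    ∃ (F : Frame M) (w : Sym2 F.V → ℝ), F.IsFilling w ρ := by
  rcases isEmpty_or_nonempty M with hM | hM
  · obtain ⟨F, w, hF, -⟩ := exists_filling_weight_eq_zero ρ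
    exact ⟨F, w, hF⟩
  · classical
    obtain ⟨T, -, hT⟩ := (connected_top (V := M)).exists_isTree_le
    obtain ⟨F, w, hF, -⟩ := exists_filling_weight_le hρ (f := id) (fun _ _ ↦ rfl) T hT
    exact ⟨F, w, hF⟩

end Main

theorem stmt1 {M : Type} [Fintype M] (ρ : M → M → ℝ) (hρ : IsPseudoMetric ρ) :
    mf ρ = sInf { x | ∃ (N : Type) (iN : Fintype N) (d : N → N → ℝ) (f : M → N),
      IsPseudoMetric d ∧ (∀ p q : M, d (f p) (f q) = ρ p q) ∧ x = @mstW N iN d } := by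
  apply le_antisymm
  · refine le_csInf ⟨_, M, inferInstance, ρ, id, hρ, fun _ _ ↦ rfl, rfl⟩ ?_
    rintro _ ⟨N, iN, d, f, hd, hext, rfl⟩
    exact mf_le_mstW hd hext
  · obtain ⟨F₀, w₀, hF₀⟩ := exists_filling hρ
    refine le_csInf ⟨_, F₀, w₀, hF₀, rfl⟩ ?_
    rintro _ ⟨F, w, hF, rfl⟩
    obtain ⟨N, iN, d, f, hd, hext, hle⟩ := exists_extension_mstW_le hρ F w hF
    refine le_trans (csInf_le ⟨0, ?_⟩ ⟨N, iN, d, f, hd, hext, rfl⟩) hle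
    rintro _ ⟨N', iN', d', f', hd', -, rfl⟩
    exact hd'.mstW_nonneg
end

section
/- Let (G, ω) be a minimal parametric filling of a finite pseudo-metric space (M, ρ). Then every non-degenerate edge of (G, ω) (i.e. every edge of positive weight) is exact: it lies on a boundary path whose total weight equals the ρ-distance between its endpoints. -/
open SimpleGraph Finset

private lemma list_sum_update {α : Type*} [DecidableEq α] (e : α) (ε : ℝ) (w : α → ℝ) :
    ∀ (l : List α), l.Nodup → e ∈ l →
      (l.map (fun f => if f = e then w f - ε else w f)).sum = (l.map w).sum - ε := by
  intro l
  induction l with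
  | nil => intro _ h; cases h
  | cons a l ih =>
    intro hnd he
    simp only [List.nodup_cons] at hnd
    simp only [List.map_cons, List.sum_cons]
    rcases List.mem_cons.mp he with rfl | he
    · rw [if_pos rfl]
      have : l.map (fun f => if f = e then w f - ε else w f) = l.map w := by
        apply List.map_congr_left
        intro f hf
        exact if_neg (by rintro rfl; exact hnd.1 hf)
      rw [this]; ring
    · have hae : a ≠ e := by rintro rfl; exact hnd.1 he
      rw [if_neg hae, ih hnd.2 he]; ring

theorem stmt3 {M : Type} [Fintype M] (ρ : M → M → ℝ) (hρ : IsPseudoMetric ρ)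
    (F : Frame M) (w : Sym2 F.V → ℝ)
    (hfill : F.IsFilling w ρ)
    (hmin : ∀ w' : Sym2 F.V → ℝ, F.IsFilling w' ρ → F.weight w ≤ F.weight w') :
    ∀ e ∈ F.G.edgeFinset, 0 < w e →
      ∃ p q : M, F.dist w (F.ι p) (F.ι q) = ρ p q ∧
        e ∈ (F.path (F.ι p) (F.ι q)).edges := by
  classical
  intro e he hwe
  by_contra hne
  push_neg at hne
  -- hne : ∀ p q, F.dist w (F.ι p) (F.ι q) = ρ p q → e ∉ edges
  set T : Finset (M × M) :=
    Finset.univ.filter (fun pq => e ∈ (F.path (F.ι pq.1) (F.ι pq.2)).edges) with hT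
  set S : Finset ℝ :=
    insert (w e) (T.image (fun pq => F.dist w (F.ι pq.1) (F.ι pq.2) - ρ pq.1 pq.2)) with hS
  have hSne : S.Nonempty := ⟨w e, Finset.mem_insert_self _ _⟩
  set ε := S.min' hSne with hε
  have hεS : ∀ x ∈ S, ε ≤ x := fun x hx => Finset.min'_le _ _ hx
  have hεpos : 0 < ε := by
    rw [hε, Finset.lt_min'_iff]
    intro y hy
    rw [hS, Finset.mem_insert] at hy
    rcases hy with rfl | hy
    · exact hwe
    · obtain ⟨pq, hpq, rfl⟩ := Finset.mem_image.mp hy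
      rw [hT, Finset.mem_filter] at hpq
      have hle := hfill.2 pq.1 pq.2
      have hneq := hne pq.1 pq.2
      have : ρ pq.1 pq.2 < F.dist w (F.ι pq.1) (F.ι pq.2) := by
        rcases lt_or_eq_of_le hle with h | h
        · exact h
        · exact absurd hpq.2 (hneq h.symm)
      linarith
  set w' : Sym2 F.V → ℝ := fun f => if f = e then w f - ε else w f with hw'
  have hεwe : ε ≤ w e := hεS _ (Finset.mem_insert_self _ _)
  have hpathnd : ∀ u v : F.V, (F.path u v).edges.Nodup := by
    intro u v
    exact ((F.tree.existsUnique_path u v).exists.choose_spec).edges_nodup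
  have hdist : ∀ p q : M, ρ p q ≤ F.dist w' (F.ι p) (F.ι q) := by
    intro p q
    by_cases hmem : e ∈ (F.path (F.ι p) (F.ι q)).edges
    · have hsum : F.dist w' (F.ι p) (F.ι q) = F.dist w (F.ι p) (F.ι q) - ε :=
        list_sum_update e ε w _ (hpathnd _ _) hmem
      have hgap : ε ≤ F.dist w (F.ι p) (F.ι q) - ρ p q := by
        apply hεS
        rw [hS, Finset.mem_insert]
        right
        exact Finset.mem_image.mpr ⟨(p, q), by simp [hT, hmem], rfl⟩
      linarith [hfill.2 p q]
    · have : F.dist w' (F.ι p) (F.ι q) = F.dist w (F.ι p) (F.ι q) := by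
        unfold Frame.dist
        congr 1
        apply List.map_congr_left
        intro f hf
        exact if_neg (by rintro rfl; exact hmem hf)
      rw [this]; exact hfill.2 p q
  have hfill' : F.IsFilling w' ρ := by
    constructor
    · intro f hf
      have hdef : w' f = if f = e then w f - ε else w f := rfl
      rw [hdef]
      split_ifs with hfe
      · subst hfe; linarith
      · exact hfill.1 f hf
    · exact hdist
  have hwt : F.weight w' = F.weight w - ε := by
    unfold Frame.weight
    rw [← Finset.add_sum_erase _ w' he, ← Finset.add_sum_erase _ w he]
    have h1 : w' e = w e - ε := if_pos rfl
    have h2 : ∀ f ∈ F.G.edgeFinset.erase e, w' f = w f :=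
      fun f hf => if_neg (Finset.ne_of_mem_erase hf)
    rw [h1, Finset.sum_congr rfl h2]; ring
  have := hmin w' hfill'
  rw [hwt] at this
  linarith
end

section
/- For every n ≥ 2, the degree 3 Steiner subratio of Euclidean space ℝⁿ equals √3/2: the infimum of mf(M) / smt(M) over all subsets M ⊆ ℝⁿ with 2 ≤ |M| ≤ 3 (with the Euclidean metric) is √3/2, and this infimum is attained when M is the vertex set of an equilateral triangle. -/
open SimpleGraph Finset

/- `smt(M,d)`: the length of a Steiner minimal tree for a finite subset `M` of the space
`(X, d)`: the infimum of `mst(N, d)` over all finite `N` with `M ⊆ N ⊆ X`. -/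
noncomputable def smtW {X : Type} (d : X → X → ℝ) (S : Finset X) : ℝ :=
  sInf { x | ∃ N : Finset X, S ⊆ N ∧ x = mstW (fun p q : N => d p.1 q.1) }

/-- The degree `n` Steiner subratio of a space `X` with distance function `d`. -/
noncomputable def ssrN {X : Type} (d : X → X → ℝ) (n : ℕ) : ℝ :=
  sInf { r | ∃ S : Finset X, 2 ≤ S.card ∧ S.card ≤ n ∧
    r = mf (fun p q : S => d p.1 q.1) / smtW d S }

/-!
Any tree containing three points `a`, `b`, `c` has a median vertex `m`: the paths from `m` to
`a`, `b` and `c` are edge-disjoint. For a filling of `{a, b, c}` this bounds the half-perimeter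
`(|ab| + |ac| + |bc|) / 2` by the weight; for a Steiner tree it bounds the length from below by
`|am| + |bm| + |cm|`. Conversely, joining the vertices to a Fermat point gives a Steiner tree of
length at most the perimeter divided by `√3`, so `mf / smt ≥ √3 / 2` (two-point sets are easier).
For an equilateral triangle of side `r` both bounds are attained: the star with edge weights
`r / 2` is a filling, and no point is closer in total than `√3 r` to the three vertices.
-/

open scoped RealInnerProductSpace

theorem List.Subperm.sum_map_le {α : Type*} {l₁ l₂ : List α} (h : l₁.Subperm l₂) {f : α → ℝ}
    (hf : ∀ x ∈ l₂, 0 ≤ f x) : (l₁.map f).sum ≤ (l₂.map f).sum := by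
  obtain ⟨l, hl, hsub⟩ := h
  rw [← (hl.map f).sum_eq]
  exact (hsub.map f).sum_le_sum (by simpa using hf)

theorem List.sum_map_le_sum_of_nodup {α : Type*} [DecidableEq α] {l : List α} (hl : l.Nodup)
    {s : Finset α} (hls : ∀ x ∈ l, x ∈ s) {f : α → ℝ} (hf : ∀ x ∈ s, 0 ≤ f x) :
    (l.map f).sum ≤ ∑ x ∈ s, f x := by
  rw [← List.sum_toFinset f hl]
  exact Finset.sum_le_sum_of_subset_of_nonneg (fun x hx => hls x (List.mem_toFinset.mp hx))
    fun x hx _ => hf x hx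

namespace SimpleGraph

variable {V : Type*} {G : SimpleGraph V}

theorem Walk.exists_walk_to_first {P : V → Prop} {u v : V} (p : G.Walk u v) (hv : P v) :
    ∃ (m : V) (q : G.Walk u m), P m ∧ (∀ x ∈ q.support, P x → x = m) ∧ q.edges.Sublist p.edges := by
  induction p with
  | nil => exact ⟨_, .nil, hv, by simp, by simp⟩
  | @cons u _ _ h _ ih =>
    by_cases hu : P u
    · exact ⟨u, .nil, hu, by simp, by simp⟩
    · obtain ⟨m, q, hm, hfirst, hsub⟩ := ih hv
      refine ⟨m, .cons h q, hm, ?_, by simpa using hsub⟩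
      rintro x hx hPx
      rw [Walk.support_cons, List.mem_cons] at hx
      exact hx.elim (fun hxu => absurd (hxu ▸ hPx) hu) (hfirst x · hPx)

namespace IsTree

variable (hG : G.IsTree)

noncomputable def path (u v : V) : G.Walk u v :=
  (hG.existsUnique_path u v).exists.choose

theorem isPath_path (u v : V) : (hG.path u v).IsPath :=
  (hG.existsUnique_path u v).exists.choose_spec

theorem path_eq {u v : V} {p : G.Walk u v} (hp : p.IsPath) : hG.path u v = p :=
  (hG.existsUnique_path u v).unique (hG.isPath_path u v) hp

noncomputable def weightedDist (w : Sym2 V → ℝ) (u v : V) : ℝ :=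
  ((hG.path u v).edges.map w).sum

variable {hG} {w : Sym2 V → ℝ}

@[simp]
theorem weightedDist_self (v : V) : hG.weightedDist w v v = 0 := by
  simp [weightedDist, hG.path_eq Walk.IsPath.nil]

theorem weightedDist_comm (u v : V) : hG.weightedDist w u v = hG.weightedDist w v u := by
  rw [weightedDist, weightedDist, hG.path_eq (hG.isPath_path v u).reverse]
  simp

theorem weightedDist_le_walk (hw : ∀ e ∈ G.edgeSet, 0 ≤ w e) {u v : V} (p : G.Walk u v) :
    hG.weightedDist w u v ≤ (p.edges.map w).sum := by
  classical
  rw [weightedDist, hG.path_eq p.bypass_isPath]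
  exact (p.bypass_isPath.edges_nodup.subperm p.edges_bypass_subset_edges).sum_map_le
    fun e he => hw e (p.edges_subset_edgeSet he)

theorem weightedDist_triangle (hw : ∀ e ∈ G.edgeSet, 0 ≤ w e) (u m v : V) :
    hG.weightedDist w u v ≤ hG.weightedDist w u m + hG.weightedDist w m v := by
  simpa [weightedDist] using weightedDist_le_walk hw ((hG.path u m).append (hG.path m v))

theorem le_weightedDist_of_ne {B : ℝ} (hw : ∀ e ∈ G.edgeSet, B ≤ w e) (hB : 0 ≤ B) {u v : V}
    (huv : u ≠ v) : B ≤ hG.weightedDist w u v := by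
  rw [weightedDist]
  cases hp : hG.path u v with
  | nil => exact absurd rfl huv
  | cons h q =>
    have hq : 0 ≤ (q.edges.map w).sum :=
      List.sum_nonneg (by simpa using fun e he => hB.trans (hw e (q.edges_subset_edgeSet he)))
    simpa using le_add_of_le_of_nonneg (hw _ h) hq

variable [Fintype V] [DecidableEq V] [DecidableRel G.Adj]

/-- Walking from `c` towards `a`, let `m` be the first vertex on the path from `a` to `b`:
the path `a → b` and the walk `c → m` share no edge, and together weigh at most the tree. -/
theorem exists_median (hw : ∀ e ∈ G.edgeSet, 0 ≤ w e) (a b c : V) :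
    ∃ m, hG.weightedDist w a m + hG.weightedDist w b m + hG.weightedDist w c m ≤
      ∑ e ∈ G.edgeFinset, w e := by
  set p := hG.path a b
  obtain ⟨m, q, hm, hfirst, hsub⟩ := (hG.path c a).exists_walk_to_first (P := (· ∈ p.support))
    p.start_mem_support
  refine ⟨m, ?_⟩
  have hsplit : hG.weightedDist w a m + hG.weightedDist w m b = (p.edges.map w).sum := by
    rw [weightedDist, weightedDist, hG.path_eq ((hG.isPath_path a b).takeUntil hm),
      hG.path_eq ((hG.isPath_path a b).dropUntil hm), ← List.sum_append, ← List.map_append,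
      ← Walk.edges_append, Walk.take_spec]
  have hdisj : ∀ e ∈ p.edges, e ∉ q.edges := by
    intro e hep heq
    induction e with
    | h x y =>
      have hx := hfirst x (q.fst_mem_support_of_mem_edges heq) (p.fst_mem_support_of_mem_edges hep)
      have hy := hfirst y (q.snd_mem_support_of_mem_edges heq) (p.snd_mem_support_of_mem_edges hep)
      subst hx hy
      exact G.irrefl (p.adj_of_mem_edges hep)
  have hnodup : (p.edges ++ q.edges).Nodup :=
    List.nodup_append.mpr ⟨(hG.isPath_path a b).edges_nodup,
      hsub.nodup (hG.isPath_path c a).edges_nodup, fun e he _ he' h => hdisj e he (h ▸ he')⟩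
  have htotal := List.sum_map_le_sum_of_nodup hnodup
    (fun e he => mem_edgeFinset.mpr <| by
      rcases List.mem_append.mp he with he | he
      exacts [p.edges_subset_edgeSet he, q.edges_subset_edgeSet he])
    fun _ he => hw _ (mem_edgeFinset.mp he)
  rw [List.map_append, List.sum_append] at htotal
  linarith [weightedDist_le_walk (hG := hG) hw q, weightedDist_comm (hG := hG) (w := w) b m]

end IsTree

end SimpleGraph

namespace SimpleGraph

variable {V : Type*} [Fintype V] [DecidableEq V]

theorem sum_edgeFinset_starGraph (r : V) (f : Sym2 V → ℝ) :
    ∑ e ∈ (starGraph r).edgeFinset, f e = ∑ x ∈ univ.erase r, f s(r, x) := by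
  have hedges : (starGraph r).edgeFinset = (univ.erase r).image (fun x => s(r, x)) := by
    ext e
    induction e with
    | h x y =>
      simp only [mem_edgeFinset, mem_edgeSet, starGraph_adj, mem_image, mem_erase, mem_univ,
        and_true]
      constructor
      · rintro ⟨hxy, rfl | rfl⟩
        exacts [⟨y, Ne.symm hxy, rfl⟩, ⟨x, hxy, Sym2.eq_swap⟩]
      · rintro ⟨z, hz, hzxy⟩
        rcases Sym2.eq_iff.mp hzxy with ⟨rfl, rfl⟩ | ⟨rfl, rfl⟩
        exacts [⟨Ne.symm hz, Or.inl rfl⟩, ⟨hz, Or.inr rfl⟩]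
  rw [hedges, sum_image]
  intro x _ y _ hxy
  grind [Sym2.eq_iff]

theorem sum_sum_ite_adj (G : SimpleGraph V) [DecidableRel G.Adj] (f : Sym2 V → ℝ) :
    ∑ u, ∑ v, (if G.Adj u v then f s(u, v) else 0) = 2 * ∑ e ∈ G.edgeFinset, f e := by
  have hdarts : ∑ u, ∑ v, (if G.Adj u v then f s(u, v) else 0) = ∑ d : G.Dart, f d.edge := by
    rw [← Finset.sum_product', ← Finset.sum_filter]
    refine (Finset.sum_bij' (fun d _ ↦ (d.fst, d.snd)) (fun xy h ↦ ⟨xy, (mem_filter.1 h).2⟩)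
      ?_ ?_ ?_ ?_ fun _ _ => rfl).symm <;> simp
  rw [hdarts, ← Finset.sum_fiberwise_of_maps_to (t := G.edgeFinset) (g := Dart.edge)
    (fun d _ => mem_edgeFinset.mpr d.edge_mem), Finset.mul_sum]
  refine Finset.sum_congr rfl fun e he => ?_
  rw [Finset.sum_congr rfl (g := fun _ => f e) (fun d hd => by rw [(mem_filter.1 hd).2]),
    sum_const, G.dart_edge_fiber_card e (mem_edgeFinset.mp he), two_smul, two_mul]

end SimpleGraph

namespace Frame

variable {M : Type} {ρ : M → M → ℝ}

theorem dist_eq_weightedDist (F : Frame M) (w : Sym2 F.V → ℝ) (u v : F.V) :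
    F.dist w u v = F.tree.weightedDist w u v :=
  rfl

theorem IsFilling.nonneg {F : Frame M} {w : Sym2 F.V → ℝ} (h : F.IsFilling w ρ) :
    ∀ e ∈ F.G.edgeSet, 0 ≤ w e :=
  fun e he => h.1 e (mem_edgeFinset.mpr he)

theorem mf_le_weight {F : Frame M} {w : Sym2 F.V → ℝ} (h : F.IsFilling w ρ) :
    mf ρ ≤ F.weight w :=
  csInf_le ⟨0, by rintro _ ⟨F, w, hF, rfl⟩; exact sum_nonneg hF.1⟩ ⟨F, w, h, rfl⟩

noncomputable def starOn [Fintype M] [DecidableEq M] (r : M) : Frame M where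
  V := M
  G := starGraph r
  tree := isTree_starGraph r
  ι := id
  inj := Function.injective_id
  joins := fun v _ => ⟨v, rfl⟩

/-- The centre `none` has degree `#M ≥ 3`, so it need not be a point of `M`. -/
noncomputable def starAround [Fintype M] [DecidableEq M] (hM : 3 ≤ Fintype.card M) : Frame M where
  V := Option M
  G := starGraph none
  tree := isTree_starGraph none
  ι := some
  inj := Option.some_injective M
  joins := by
    rintro (_ | x) hdeg
    · rw [degree_starGraph_center, Fintype.card_option] at hdeg
      omega
    · exact ⟨x, rfl⟩

end Frame

section MinimalFilling

variable {M : Type} [Fintype M] {ρ : M → M → ℝ}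

theorem exists_isFilling (hρ : ∀ p, ρ p p = 0) [Nonempty M] :
    ∃ (F : Frame M) (w : Sym2 F.V → ℝ), F.IsFilling w ρ := by
  classical
  set B := ∑ p, ∑ q, |ρ p q|
  have hB : ∀ p q, |ρ p q| ≤ B := fun p q =>
    (single_le_sum (fun q _ => abs_nonneg (ρ p q)) (mem_univ q)).trans
      (single_le_sum (f := fun p => ∑ q, |ρ p q|) (fun p _ => sum_nonneg fun q _ => abs_nonneg _)
        (mem_univ p))
  have hB0 : 0 ≤ B := sum_nonneg fun p _ => sum_nonneg fun q _ => abs_nonneg _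
  refine ⟨Frame.starOn (Classical.arbitrary M), fun _ => B, fun _ _ => hB0, fun p q => ?_⟩
  rw [Frame.dist_eq_weightedDist]
  by_cases hpq : p = q
  · subst hpq
    simp [hρ]
  · exact (le_abs_self _).trans ((hB p q).trans
      (IsTree.le_weightedDist_of_ne (fun _ _ => le_rfl) hB0 hpq))

theorem le_mf (hρ : ∀ p, ρ p p = 0) [Nonempty M] {L : ℝ}
    (h : ∀ (F : Frame M) (w : Sym2 F.V → ℝ), F.IsFilling w ρ → L ≤ F.weight w) : L ≤ mf ρ := by
  obtain ⟨F, w, hF⟩ := exists_isFilling hρ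
  exact le_csInf ⟨_, F, w, hF, rfl⟩ fun _ ⟨F, w, hF, hx⟩ => hx ▸ h F w hF

theorem half_perimeter_le_mf (hρ : ∀ p, ρ p p = 0) (p q r : M) :
    (ρ p q + ρ q r + ρ p r) / 2 ≤ mf ρ := by
  have : Nonempty M := ⟨p⟩
  refine le_mf hρ fun F w hF => ?_
  obtain ⟨m, hm⟩ := F.tree.exists_median hF.nonneg (F.ι p) (F.ι q) (F.ι r)
  have hside : ∀ x y, ρ x y ≤ F.tree.weightedDist w (F.ι x) m + F.tree.weightedDist w (F.ι y) m :=
    fun x y => (hF.2 x y).trans <| by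
      rw [Frame.dist_eq_weightedDist, F.tree.weightedDist_comm (F.ι y)]
      exact IsTree.weightedDist_triangle hF.nonneg _ _ _
  rw [Frame.weight]
  linarith [hside p q, hside q r, hside p r]

theorem mf_le_sum_of_le_add [DecidableEq M] (hM : 3 ≤ Fintype.card M) (hρ : ∀ p, ρ p p = 0)
    (h : M → ℝ) (h0 : ∀ p, 0 ≤ h p) (hle : ∀ p q, p ≠ q → ρ p q ≤ h p + h q) :
    mf ρ ≤ ∑ p, h p := by
  let h' : Option M → ℝ := fun x => x.elim 0 h
  have h'0 : ∀ x, 0 ≤ h' x := by rintro (_ | x) <;> simp [h', h0]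
  let w : Sym2 (Option M) → ℝ := Sym2.lift ⟨fun x y => h' x + h' y, fun _ _ => add_comm _ _⟩
  have hw : ∀ x y, w s(x, y) = h' x + h' y := fun _ _ => rfl
  have hT := isTree_starGraph (none : Option M)
  have hdist : ∀ p q, p ≠ q → hT.weightedDist w (some p) (some q) = h p + h q := by
    intro p q hpq
    have hpath : (Walk.cons (starGraph_center_adj' (Option.some_ne_none p).symm)
        (Walk.cons (starGraph_center_adj (Option.some_ne_none q).symm) Walk.nil)).IsPath := by
      simp [Walk.isPath_def, hpq]
    simp [IsTree.weightedDist, hT.path_eq hpath, hw, h']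
  have hfill : (Frame.starAround hM).IsFilling w ρ := by
    refine ⟨fun e _ => ?_, fun p q => ?_⟩
    · induction e with
      | h x y => exact add_nonneg (h'0 x) (h'0 y)
    · show ρ p q ≤ hT.weightedDist w (some p) (some q)
      by_cases hpq : p = q
      · simp [hpq, hρ]
      · exact (hdist p q hpq).symm ▸ hle p q hpq
  calc mf ρ ≤ (Frame.starAround hM).weight w := Frame.mf_le_weight hfill
    _ = ∑ e ∈ (starGraph none).edgeFinset, w e := rfl
    _ = ∑ p, h p := by
      rw [sum_edgeFinset_starGraph, sum_erase _ (by simp [hw, h'])]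
      simp [hw, h', Fintype.sum_option]

end MinimalFilling

section SteinerTree

def edgeDist {N : Type*} [PseudoMetricSpace N] : Sym2 N → ℝ :=
  Sym2.lift ⟨dist, dist_comm⟩

@[simp]
theorem edgeDist_mk {N : Type*} [PseudoMetricSpace N] (x y : N) : edgeDist s(x, y) = dist x y :=
  rfl

theorem edgeDist_nonneg {N : Type*} [PseudoMetricSpace N] (e : Sym2 N) : 0 ≤ edgeDist e := by
  induction e with
  | h x y => exact dist_nonneg

theorem dist_le_sum_edgeDist {N : Type*} [PseudoMetricSpace N] {G : SimpleGraph N} {u v : N}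
    (p : G.Walk u v) : dist u v ≤ (p.edges.map edgeDist).sum := by
  induction p with
  | nil => simp
  | @cons u v w _ _ ih =>
    simp only [Walk.edges_cons, List.map_cons, List.sum_cons, edgeDist_mk]
    linarith [dist_triangle u v w]

variable {N : Type} [Fintype N] [PseudoMetricSpace N]

open Classical in
theorem mstW_eq_sInf_sum_edgeDist :
    mstW (fun p q : N => dist p q) =
      sInf {x | ∃ H : SimpleGraph N, H.IsTree ∧ x = ∑ e ∈ H.edgeFinset, edgeDist e} := by
  unfold mstW
  congr 1
  ext x
  refine exists_congr fun H => and_congr_right fun _ => ?_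
  have h2 := sum_sum_ite_adj H edgeDist
  simp only [edgeDist_mk] at h2
  rw [h2, mul_div_cancel_left₀ _ two_ne_zero]

theorem mstW_nonneg : 0 ≤ mstW (fun p q : N => dist p q) := by
  classical
  rw [mstW_eq_sInf_sum_edgeDist]
  exact Real.sInf_nonneg fun _ ⟨_, _, hx⟩ => hx ▸ sum_nonneg fun e _ => edgeDist_nonneg e

theorem mstW_le_sum_dist (r : N) : mstW (fun p q : N => dist p q) ≤ ∑ x, dist r x := by
  classical
  rw [mstW_eq_sInf_sum_edgeDist]
  have hbdd : BddBelow {x | ∃ H : SimpleGraph N, H.IsTree ∧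
      x = ∑ e ∈ H.edgeFinset, edgeDist e} := by
    refine ⟨0, ?_⟩
    rintro _ ⟨H, -, rfl⟩
    exact sum_nonneg fun e _ => edgeDist_nonneg e
  refine (csInf_le hbdd ⟨starGraph r, isTree_starGraph r, rfl⟩).trans_eq ?_
  convert (sum_edgeFinset_starGraph r edgeDist).trans (sum_erase _ (by simp))
  rfl

theorem le_mstW [Nonempty N] {B : ℝ}
    (h : ∀ (H : SimpleGraph N) [DecidableRel H.Adj], H.IsTree →
      B ≤ ∑ e ∈ H.edgeFinset, edgeDist e) :
    B ≤ mstW (fun p q : N => dist p q) := by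
  classical
  rw [mstW_eq_sInf_sum_edgeDist]
  refine le_csInf ⟨_, starGraph (Classical.arbitrary N), isTree_starGraph _, rfl⟩ ?_
  rintro _ ⟨H, hT, rfl⟩
  exact h H hT

variable {X : Type} [PseudoMetricSpace X]

theorem smtW_le_sum_dist (S : Finset X) (m : X) :
    smtW (fun x y : X => dist x y) S ≤ ∑ y ∈ S, dist m y := by
  classical
  have hbdd : BddBelow {x | ∃ N : Finset X, S ⊆ N ∧ x = mstW (fun p q : N => dist p.1 q.1)} :=
    ⟨0, by rintro _ ⟨N, -, rfl⟩; exact mstW_nonneg⟩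
  refine (csInf_le hbdd ⟨insert m S, subset_insert m S, rfl⟩).trans ?_
  refine (mstW_le_sum_dist (⟨m, mem_insert_self m S⟩ : ↥(insert m S))).trans_eq ?_
  exact (sum_coe_sort (insert m S) (dist m)).trans (sum_insert_zero (dist_self m))

theorem le_smtW_of_le_sum_dist (S : Finset X) {a b c : X} (ha : a ∈ S) (hb : b ∈ S) (hc : c ∈ S)
    {B : ℝ} (h : ∀ m, B ≤ dist a m + dist b m + dist c m) :
    B ≤ smtW (fun x y : X => dist x y) S := by
  classical
  refine le_csInf ⟨_, S, subset_rfl, rfl⟩ ?_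
  rintro _ ⟨N, hSN, rfl⟩
  have : Nonempty N := ⟨⟨a, hSN ha⟩⟩
  refine le_mstW fun H _ hT => ?_
  obtain ⟨m, hm⟩ := hT.exists_median (fun e _ => edgeDist_nonneg e)
    ⟨a, hSN ha⟩ ⟨b, hSN hb⟩ ⟨c, hSN hc⟩
  have hd : ∀ x (hx : x ∈ N), dist x (m : X) ≤ hT.weightedDist edgeDist ⟨x, hx⟩ m :=
    fun x hx => dist_le_sum_edgeDist (hT.path ⟨x, hx⟩ m)
  linarith [h m, hd a (hSN ha), hd b (hSN hb), hd c (hSN hc)]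

end SteinerTree

section FermatPoint

theorem exists_forall_sum_norm_sub_le {E : Type*} [SeminormedAddCommGroup E] [ProperSpace E]
    {S : Finset E} (hS : S.Nonempty) :
    ∃ m, ∀ y, ∑ x ∈ S, ‖x - m‖ ≤ ∑ x ∈ S, ‖x - y‖ := by
  obtain ⟨x₀, hx₀⟩ := hS
  refine Continuous.exists_forall_le (by fun_prop)
    (Filter.tendsto_atTop_mono (fun y => ?_) (tendsto_dist_left_cocompact_atTop x₀))
  rw [dist_eq_norm]
  exact single_le_sum (f := fun x => ‖x - y‖) (fun x _ => norm_nonneg _) hx₀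

open NormedSpace (normalize)

variable {E : Type*} [NormedAddCommGroup E] [InnerProductSpace ℝ E]

theorem real_inner_self_normalize (x : E) : ⟪x, normalize x⟫ = ‖x‖ := by
  rcases eq_or_ne x 0 with rfl | hx
  · simp
  · rw [NormedSpace.normalize, real_inner_smul_right, real_inner_self_eq_norm_sq]
    field_simp

theorem norm_sub_smul_le {v : E} (hv : v ≠ 0) (g : E) {t : ℝ} :
    ‖v - t • g‖ ≤ ‖v‖ - t * ⟪normalize v, g⟫ + t ^ 2 * (‖g‖ ^ 2 / ‖v‖) := by
  have hv₀ : 0 < ‖v‖ := norm_pos_iff.mpr hv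
  have hexp : ‖v - t • g‖ ^ 2 = ‖v‖ ^ 2 - 2 * t * ⟪v, g⟫ + t ^ 2 * ‖g‖ ^ 2 := by
    rw [norm_sub_sq_real, real_inner_smul_right, norm_smul, mul_pow, Real.norm_eq_abs, sq_abs]
    ring
  have hrhs : ‖v‖ - t * ⟪normalize v, g⟫ + t ^ 2 * (‖g‖ ^ 2 / ‖v‖) =
      (‖v‖ ^ 2 - t * ⟪v, g⟫ + t ^ 2 * ‖g‖ ^ 2) / ‖v‖ := by
    rw [NormedSpace.normalize, real_inner_smul_left]
    field_simp
  rw [hrhs, le_div_iff₀ hv₀]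
  nlinarith [sq_nonneg (‖v‖ - ‖v - t • g‖), sq_nonneg (t * ‖g‖)]

/-- Kuhn's optimality condition for the Fermat–Weber problem, obtained by moving the minimiser `m`
a little in the direction of `∑ x ∈ S, normalize (x - m)`. -/
theorem norm_sum_normalize_sub_le_of_forall_le [DecidableEq E] (S : Finset E) {m : E}
    (hmin : ∀ y, ∑ x ∈ S, ‖x - m‖ ≤ ∑ x ∈ S, ‖x - y‖) :
    ‖∑ x ∈ S, normalize (x - m)‖ ≤ if m ∈ S then 1 else 0 := by
  set g := ∑ x ∈ S, normalize (x - m) with hg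
  set k : ℝ := if m ∈ S then 1 else 0
  set C := ∑ x ∈ S, ‖g‖ ^ 2 / ‖x - m‖ with hC
  have hk : 0 ≤ k := by positivity
  have hC₀ : 0 ≤ C := by positivity
  have hstep : ∀ t, 0 < t → ‖g‖ ^ 2 ≤ k * ‖g‖ + t * C := by
    intro t ht
    have hterm : ∀ x ∈ S, ‖x - (m + t • g)‖ ≤ ‖x - m‖ - t * ⟪normalize (x - m), g⟫ +
        t * (if x = m then ‖g‖ else 0) + t ^ 2 * (‖g‖ ^ 2 / ‖x - m‖) := fun x _ => by
      rw [sub_add_eq_sub_sub]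
      rcases eq_or_ne x m with rfl | hx
      · simp [norm_smul, abs_of_pos ht]
      · simpa [hx] using norm_sub_smul_le (sub_ne_zero.mpr hx) g (t := t)
    have hsum := (hmin (m + t • g)).trans (sum_le_sum hterm)
    simp only [sum_add_distrib, sum_sub_distrib, ← mul_sum, ← sum_inner, sum_ite_eq'] at hsum
    rw [← hg, ← hC, real_inner_self_eq_norm_sq] at hsum
    have hk' : (if m ∈ S then ‖g‖ else 0) = k * ‖g‖ := by split_ifs <;> simp [k, *]
    rw [hk'] at hsum
    nlinarith
  have hsq : ‖g‖ ^ 2 ≤ k * ‖g‖ := by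
    refine le_of_forall_pos_le_add fun ε hε => ?_
    have := hstep (ε / (C + 1)) (by positivity)
    have : ε / (C + 1) * C ≤ ε := by
      rw [div_mul_eq_mul_div, div_le_iff₀ (by positivity)]
      nlinarith
    linarith
  nlinarith [norm_nonneg g]

end FermatPoint

theorem sqrt_three_le_two : √3 ≤ 2 := by
  rw [show (2 : ℝ) = √(2 ^ 2) by simp]
  exact Real.sqrt_le_sqrt (by norm_num)

section Triangle

open NormedSpace (normalize)

variable {E : Type*} [NormedAddCommGroup E] [InnerProductSpace ℝ E]

theorem norm_sub_eq_sqrt_three_of_add_add_eq_zero {x y z : E} (hx : ‖x‖ = 1) (hy : ‖y‖ = 1)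
    (hz : ‖z‖ = 1) (h : x + y + z = 0) : ‖x - y‖ = √3 := by
  have hxy : ‖x + y‖ = 1 := by rw [eq_neg_of_add_eq_zero_left h, norm_neg, hz]
  have hinner : ⟪x, y⟫ = -1 / 2 := by
    have := norm_add_sq_real x y
    rw [hxy, hx, hy] at this
    linarith
  rw [← Real.sqrt_sq (norm_nonneg _), norm_sub_sq_real, hx, hy, hinner]
  norm_num

/-- Pair each side `x - y` with `normalize x - normalize y`, a vector of length `√3`. -/
theorem sqrt_three_mul_sum_norm_le_of_sum_normalize_eq_zero {a b c : E} (ha : a ≠ 0) (hb : b ≠ 0)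
    (hc : c ≠ 0) (h : normalize a + normalize b + normalize c = 0) :
    √3 * (‖a‖ + ‖b‖ + ‖c‖) ≤ ‖a - b‖ + ‖a - c‖ + ‖b - c‖ := by
  have hua := NormedSpace.norm_normalize ha
  have hub := NormedSpace.norm_normalize hb
  have huc := NormedSpace.norm_normalize hc
  have hab := norm_sub_eq_sqrt_three_of_add_add_eq_zero hua hub huc h
  have hac := norm_sub_eq_sqrt_three_of_add_add_eq_zero hua huc hub (by rw [← h]; abel)
  have hbc := norm_sub_eq_sqrt_three_of_add_add_eq_zero hub huc hua (by rw [← h]; abel)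
  have hrow : ∀ v : E, ⟪v, normalize a⟫ + ⟪v, normalize b⟫ + ⟪v, normalize c⟫ = 0 := fun v => by
    rw [← inner_add_right, ← inner_add_right, h, inner_zero_right]
  have h1 := (real_inner_le_norm (a - b) (normalize a - normalize b)).trans_eq (by rw [hab])
  have h2 := (real_inner_le_norm (a - c) (normalize a - normalize c)).trans_eq (by rw [hac])
  have h3 := (real_inner_le_norm (b - c) (normalize b - normalize c)).trans_eq (by rw [hbc])
  have ra := hrow a
  have rb := hrow b
  have rc := hrow c
  simp only [inner_sub_left, inner_sub_right, real_inner_self_normalize] at h1 h2 h3 ra rb rc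
  have h3s : 3 * (‖a‖ + ‖b‖ + ‖c‖) ≤ √3 * (‖a - b‖ + ‖a - c‖ + ‖b - c‖) := by linarith
  have h3s' := mul_le_mul_of_nonneg_left h3s (Real.sqrt_nonneg 3)
  rw [← mul_assoc √3 √3, Real.mul_self_sqrt (by norm_num)] at h3s'
  linarith

theorem sqrt_three_mul_add_norm_le_of_norm_normalize_add_le {b c : E} (hb : b ≠ 0) (hc : c ≠ 0)
    (h : ‖normalize b + normalize c‖ ≤ 1) : √3 * (‖b‖ + ‖c‖) ≤ ‖b‖ + ‖c‖ + ‖b - c‖ := by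
  have hinner : ⟪normalize b, normalize c⟫ ≤ -1 / 2 := by
    have := norm_add_sq_real (normalize b) (normalize c)
    rw [NormedSpace.norm_normalize hb, NormedSpace.norm_normalize hc] at this
    nlinarith [norm_nonneg (normalize b + normalize c)]
  have hbc : ⟪b, c⟫ = ‖b‖ * ‖c‖ * ⟪normalize b, normalize c⟫ := by
    conv_lhs => rw [← NormedSpace.norm_smul_normalize b, ← NormedSpace.norm_smul_normalize c]
    rw [real_inner_smul_left, real_inner_smul_right]
    ring
  have hsq : (√3 * (‖b‖ + ‖c‖)) ^ 2 ≤ (2 * ‖b - c‖) ^ 2 := by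
    rw [mul_pow, mul_pow, Real.sq_sqrt (by norm_num), norm_sub_sq_real, hbc]
    nlinarith [mul_nonneg (norm_nonneg b) (norm_nonneg c), sq_nonneg (‖b‖ - ‖c‖)]
  have h2 := le_of_pow_le_pow_left₀ two_ne_zero (by positivity) hsq
  nlinarith [mul_le_mul_of_nonneg_right sqrt_three_le_two (by positivity : 0 ≤ ‖b‖ + ‖c‖)]

/-- At a minimiser of the distance sum, either the unit vectors towards the vertices cancel, or the
minimiser is a vertex at which the triangle has an angle of at least `120°`. -/
theorem exists_sqrt_three_mul_sum_dist_le [ProperSpace E] {a b c : E} (hab : a ≠ b) (hac : a ≠ c)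
    (hbc : b ≠ c) :
    ∃ m, √3 * (dist a m + dist b m + dist c m) ≤ dist a b + dist a c + dist b c := by
  classical
  obtain ⟨m, hm⟩ := exists_forall_sum_norm_sub_le (S := {a, b, c}) (insert_nonempty _ _)
  have hfo := norm_sum_normalize_sub_le_of_forall_le {a, b, c} hm
  rw [sum_insert (by simp [hab, hac]), sum_insert (by simp [hbc]), sum_singleton,
    ← add_assoc] at hfo
  refine ⟨m, ?_⟩
  simp only [dist_eq_norm]
  split_ifs at hfo with hmS
  · simp only [mem_insert, mem_singleton] at hmS
    rcases hmS with rfl | rfl | rfl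
    · have := sqrt_three_mul_add_norm_le_of_norm_normalize_add_le (sub_ne_zero.mpr hab.symm)
        (sub_ne_zero.mpr hac.symm) (by simpa using hfo)
      rw [sub_sub_sub_cancel_right] at this
      rw [sub_self, norm_zero, zero_add, norm_sub_rev m b, norm_sub_rev m c]
      linarith
    · have := sqrt_three_mul_add_norm_le_of_norm_normalize_add_le (sub_ne_zero.mpr hab)
        (sub_ne_zero.mpr hbc.symm) (by simpa using hfo)
      rw [sub_sub_sub_cancel_right] at this
      rw [sub_self, norm_zero, add_zero, norm_sub_rev m c]
      linarith
    · have := sqrt_three_mul_add_norm_le_of_norm_normalize_add_le (sub_ne_zero.mpr hac)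
        (sub_ne_zero.mpr hbc) (by simpa using hfo)
      rw [sub_sub_sub_cancel_right] at this
      rw [sub_self, norm_zero, add_zero]
      linarith
  · simp only [mem_insert, mem_singleton, not_or] at hmS
    obtain ⟨ha, hb, hc⟩ := hmS
    simpa only [sub_sub_sub_cancel_right] using
      sqrt_three_mul_sum_norm_le_of_sum_normalize_eq_zero (sub_ne_zero.mpr (Ne.symm ha))
        (sub_ne_zero.mpr (Ne.symm hb)) (sub_ne_zero.mpr (Ne.symm hc)) (norm_le_zero_iff.mp hfo)

/-- Test `‖x i - m‖` against the unit vector `(x i - o) / R`; summed over `i`, the cross terms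
cancel. -/
theorem card_mul_le_sum_norm_sub {ι : Type*} (s : Finset ι) (x : ι → E) {o : E} {R : ℝ}
    (hR : ∀ i ∈ s, ‖x i - o‖ = R) (ho : ∑ i ∈ s, (x i - o) = 0) (m : E) :
    #s * R ≤ ∑ i ∈ s, ‖x i - m‖ := by
  have hterm : ∀ i ∈ s, R ^ 2 + ⟪x i - o, o - m⟫ ≤ R * ‖x i - m‖ := fun i hi => by
    have := real_inner_le_norm (x i - o) (x i - m)
    rwa [← sub_add_sub_cancel (x i) o m, inner_add_right, real_inner_self_eq_norm_sq,
      sub_add_sub_cancel, hR i hi] at this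
  have hsum := sum_le_sum hterm
  rw [sum_add_distrib, ← sum_inner, ho, inner_zero_left, sum_const, nsmul_eq_mul, ← mul_sum,
    add_zero] at hsum
  rcases s.eq_empty_or_nonempty with rfl | ⟨i, hi⟩
  · simp
  rcases (hR i hi ▸ norm_nonneg _ : 0 ≤ R).eq_or_lt with rfl | hRpos
  · simpa using sum_nonneg fun i _ => norm_nonneg (x i - m)
  · nlinarith

theorem norm_sub_centroid_of_equilateral {a b c : E} {r : ℝ} (hab : ‖a - b‖ = r)
    (hac : ‖a - c‖ = r) (hbc : ‖b - c‖ = r) : ‖a - (3 : ℝ)⁻¹ • (a + b + c)‖ = r / √3 := by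
  have hr : 0 ≤ r := hab ▸ norm_nonneg _
  have hinner : 2 * ⟪a - b, a - c⟫ = r ^ 2 := by
    have := norm_sub_sq_real (a - b) (a - c)
    rw [sub_sub_sub_cancel_left, norm_sub_rev, hbc, hab, hac] at this
    linarith
  rw [← sq_eq_sq₀ (norm_nonneg _) (by positivity),
    show a - (3 : ℝ)⁻¹ • (a + b + c) = (3 : ℝ)⁻¹ • ((a - b) + (a - c)) by module,
    norm_smul, mul_pow, norm_add_sq_real, hab, hac, div_pow, Real.sq_sqrt (by norm_num)]
  norm_num
  linarith

theorem sqrt_three_mul_le_sum_dist_of_equilateral {a b c : E} {r : ℝ} (hab : dist a b = r)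
    (hac : dist a c = r) (hbc : dist b c = r) (m : E) :
    √3 * r ≤ dist a m + dist b m + dist c m := by
  rw [dist_eq_norm] at hab hac hbc
  obtain ⟨o, ho⟩ : ∃ o : E, o = (3 : ℝ)⁻¹ • (a + b + c) := ⟨_, rfl⟩
  have ha : ‖a - o‖ = r / √3 := ho ▸ norm_sub_centroid_of_equilateral hab hac hbc
  have hb : ‖b - o‖ = r / √3 := by
    rw [ho, show a + b + c = b + a + c by abel]
    exact norm_sub_centroid_of_equilateral (by rwa [norm_sub_rev]) hbc hac
  have hc : ‖c - o‖ = r / √3 := by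
    rw [ho, show a + b + c = c + a + b by abel]
    exact norm_sub_centroid_of_equilateral (by rwa [norm_sub_rev]) (by rwa [norm_sub_rev]) hab
  have key := card_mul_le_sum_norm_sub univ ![a, b, c] (o := o) (R := r / √3)
    (by simp [Fin.forall_fin_succ, ha, hb, hc]) (by simp [Fin.sum_univ_three, ho]; module) m
  simp only [Fin.sum_univ_three, card_univ, Fintype.card_fin] at key
  simp only [dist_eq_norm]
  convert key using 1
  · field_simp
    rw [Real.sq_sqrt (by norm_num)]
    ring
  · simp

theorem exists_equilateral {ι : Type*} {v : ι → E} (hv : Orthonormal ℝ v) {i j : ι} (hij : i ≠ j) :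
    ∃ a b c : E, dist a b = 1 ∧ dist a c = 1 ∧ dist b c = 1 := by
  have hnorm : ∀ x y : ℝ, ‖x • v i + y • v j‖ = √(x ^ 2 + y ^ 2) := fun x y => by
    rw [← Real.sqrt_sq (norm_nonneg _), norm_add_sq_real, real_inner_smul_left,
      real_inner_smul_right, hv.2 hij, norm_smul, norm_smul, hv.1 i, hv.1 j]
    simp
  refine ⟨0, v i, (1 / 2 : ℝ) • v i + (√3 / 2) • v j, ?_, ?_, ?_⟩
  · simp [hv.1 i]
  · rw [dist_eq_norm, zero_sub, norm_neg, hnorm, div_pow, div_pow, Real.sq_sqrt (by norm_num)]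
    norm_num
  · rw [dist_eq_norm, show v i - ((1 / 2 : ℝ) • v i + (√3 / 2) • v j) =
      (1 / 2 : ℝ) • v i + (-(√3 / 2)) • v j by module, hnorm, neg_sq, div_pow, div_pow,
      Real.sq_sqrt (by norm_num)]
    norm_num

end Triangle

section SteinerRatio

theorem half_perimeter_le_mf_dist {X : Type} [PseudoMetricSpace X] (S : Finset X) {a b c : X}
    (ha : a ∈ S) (hb : b ∈ S) (hc : c ∈ S) :
    (dist a b + dist b c + dist a c) / 2 ≤ mf (fun p q : S => dist p.1 q.1) :=
  half_perimeter_le_mf (ρ := fun p q : S => dist p.1 q.1) (fun p => _root_.dist_self p.1)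
    ⟨a, ha⟩ ⟨b, hb⟩ ⟨c, hc⟩

theorem mf_eq_of_equilateral {X : Type} [MetricSpace X] [DecidableEq X] {a b c : X} {r : ℝ}
    (hr : 0 < r) (hab : dist a b = r) (hac : dist a c = r) (hbc : dist b c = r) :
    mf (fun p q : ({a, b, c} : Finset X) => dist p.1 q.1) = 3 * r / 2 := by
  have hcard : Fintype.card ({a, b, c} : Finset X) = 3 := by
    rw [Fintype.card_coe, card_eq_three]
    exact ⟨a, b, c, dist_pos.mp (hab ▸ hr), dist_pos.mp (hac ▸ hr), dist_pos.mp (hbc ▸ hr), rfl⟩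
  have hdist : ∀ p q : ({a, b, c} : Finset X), p ≠ q → dist p.1 q.1 = r := by
    rintro ⟨x, hx⟩ ⟨y, hy⟩ hxy
    simp only [mem_insert, mem_singleton, ne_eq, Subtype.mk.injEq] at hx hy hxy ⊢
    rcases hx with rfl | rfl | rfl <;> rcases hy with rfl | rfl | rfl <;>
      first | exact absurd rfl hxy | assumption | (rw [_root_.dist_comm]; assumption)
  refine le_antisymm ?_ ?_
  · refine (mf_le_sum_of_le_add hcard.ge (fun p => _root_.dist_self p.1) (fun _ => r / 2)
      (fun _ => by positivity) fun p q hpq => by rw [hdist p q hpq]; linarith).trans_eq ?_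
    rw [sum_const, card_univ, hcard]
    ring
  · have := half_perimeter_le_mf_dist {a, b, c} (a := a) (b := b) (c := c)
      (by simp) (by simp) (by simp)
    rw [hab, hbc, hac] at this
    linarith

variable {E : Type} [NormedAddCommGroup E] [InnerProductSpace ℝ E]

theorem sqrt_three_div_two_le_mf_div_smtW [ProperSpace E] {S : Finset E} (h2 : 2 ≤ #S)
    (h3 : #S ≤ 3) :
    √3 / 2 ≤ mf (fun p q : S => dist p.1 q.1) / smtW (fun x y : E => dist x y) S := by
  classical
  obtain ⟨p, hp, q, hq, hpq⟩ := one_lt_card.mp h2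
  have hpos : 0 < smtW (fun x y : E => dist x y) S :=
    (dist_pos.mpr hpq).trans_le (le_smtW_of_le_sum_dist S hp hq hq fun m => by
      linarith [dist_triangle_right p q m, dist_nonneg (x := q) (y := m)])
  rw [le_div_iff₀ hpos]
  obtain hS | hS : #S = 2 ∨ #S = 3 := by omega
  · obtain ⟨x, y, hxy, rfl⟩ := card_eq_two.mp hS
    have hmf := half_perimeter_le_mf_dist {x, y} (a := x) (b := y) (c := y)
      (by simp) (by simp) (by simp)
    have hsmt := smtW_le_sum_dist {x, y} x
    rw [sum_pair hxy, _root_.dist_self, zero_add] at hsmt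
    rw [_root_.dist_self] at hmf
    nlinarith [sqrt_three_le_two, dist_nonneg (x := x) (y := y)]
  · obtain ⟨a, b, c, hab, hac, hbc, rfl⟩ := card_eq_three.mp hS
    obtain ⟨m, hm⟩ := exists_sqrt_three_mul_sum_dist_le hab hac hbc
    have hmf := half_perimeter_le_mf_dist {a, b, c} (a := a) (b := b) (c := c)
      (by simp) (by simp) (by simp)
    have hsmt := smtW_le_sum_dist {a, b, c} m
    rw [sum_insert (by simp [hab, hac]), sum_insert (by simp [hbc]), sum_singleton,
      _root_.dist_comm m a, _root_.dist_comm m b, _root_.dist_comm m c] at hsmt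
    nlinarith [Real.sqrt_nonneg 3]

variable [DecidableEq E] {a b c : E} {r : ℝ}

theorem smtW_eq_of_equilateral [ProperSpace E] (hr : 0 < r) (hab : dist a b = r)
    (hac : dist a c = r) (hbc : dist b c = r) :
    smtW (fun x y : E => dist x y) {a, b, c} = √3 * r := by
  have hab' : a ≠ b := dist_pos.mp (hab ▸ hr)
  have hac' : a ≠ c := dist_pos.mp (hac ▸ hr)
  have hbc' : b ≠ c := dist_pos.mp (hbc ▸ hr)
  refine le_antisymm ?_ (le_smtW_of_le_sum_dist _ (by simp) (by simp) (by simp)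
    (sqrt_three_mul_le_sum_dist_of_equilateral hab hac hbc))
  obtain ⟨m, hm⟩ := exists_sqrt_three_mul_sum_dist_le hab' hac' hbc'
  refine (smtW_le_sum_dist {a, b, c} m).trans ?_
  rw [sum_insert (by simp [hab', hac']), sum_insert (by simp [hbc']), sum_singleton,
    _root_.dist_comm m a, _root_.dist_comm m b, _root_.dist_comm m c]
  rw [hab, hac, hbc] at hm
  have hm' := mul_le_mul_of_nonneg_left hm (Real.sqrt_nonneg 3)
  rw [← mul_assoc, Real.mul_self_sqrt (by norm_num)] at hm'
  linarith

theorem mf_div_smtW_of_equilateral [ProperSpace E] (hr : 0 < r) (hab : dist a b = r)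
    (hac : dist a c = r) (hbc : dist b c = r) :
    mf (fun p q : ({a, b, c} : Finset E) => dist p.1 q.1) /
      smtW (fun x y : E => dist x y) {a, b, c} = √3 / 2 := by
  rw [mf_eq_of_equilateral hr hab hac hbc, smtW_eq_of_equilateral hr hab hac hbc]
  field_simp
  rw [Real.sq_sqrt (by norm_num)]

end SteinerRatio

open Classical in
theorem stmt18 (n : ℕ) (hn : 2 ≤ n) :
    ssrN (fun x y : EuclideanSpace ℝ (Fin n) => dist x y) 3 = Real.sqrt 3 / 2 ∧
    ∀ (a b c : EuclideanSpace ℝ (Fin n)) (r : ℝ), 0 < r →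
      dist a b = r → dist a c = r → dist b c = r →
      mf (fun p q : ({a, b, c} : Finset (EuclideanSpace ℝ (Fin n))) => dist p.1 q.1) /
        smtW (fun x y : EuclideanSpace ℝ (Fin n) => dist x y) {a, b, c} =
        Real.sqrt 3 / 2 := by
  obtain ⟨a, b, c, hab, hac, hbc⟩ :=
    exists_equilateral (EuclideanSpace.orthonormal_single (𝕜 := ℝ) (ι := Fin n))
      (i := ⟨0, by omega⟩) (j := ⟨1, by omega⟩) (by simp)
  have hcard : #{a, b, c} = 3 := card_eq_three.mpr
    ⟨a, b, c, dist_pos.mp (by linarith), dist_pos.mp (by linarith), dist_pos.mp (by linarith), rfl⟩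
  refine ⟨IsLeast.csInf_eq ⟨⟨{a, b, c}, by omega, by omega,
    (mf_div_smtW_of_equilateral one_pos hab hac hbc).symm⟩, ?_⟩,
    fun _ _ _ _ hr => mf_div_smtW_of_equilateral hr⟩
  rintro _ ⟨S, h2, h3, rfl⟩
  exact sqrt_three_div_two_le_mf_div_smtW h2 h3
end
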